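/- Geometric covering lemma on the circle: for every measurable set E ⊆ T with |E| > 0 there exists a measurable F ⊆ E with |F| > 0 such that for all r ∈ [0,1) and all ξ ∈ F, |J(rξ) ∩ E| / |J(rξ)| ≥ |E|/(2^4 π), where for re^{iθ} ∈ D, J(re^{iθ}) = {e^{it} : |t−θ| ≤ π(1−r)} is the arc of length 2π(1−r) centered at e^{iθ}. -/

import Mathlib

/-!
Lift `E` to the `2π`-periodic set `Ẽ ⊆ ℝ` and put `c = |E| / (16π)`. Call a point
`x ∈ Ẽ ∩ (0, 2π]` bad if some interval centred at `x` of radius at most `π` meets `Ẽ` in less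
than `c` times its length. Any finite family of open intervals has a subfamily with the same
union in which no point lies in three intervals. Applied to a compact part of the bad set, this
bounds its measure by `2c · |[-π, 3π]| = |E| / 2`.
So the good points have positive measure, and `F` is the image of a compact set of good points:
at a good point every arc `J(rξ)`, of half-length `π(1 - r) ≤ π`, lifts to such an interval.
-/

/-- Arc-length measure on the unit circle, as the pushforward of Lebesgue measure on
`[0, 2π)` under `θ ↦ e^{iθ}`. -/
noncomputable def circleMeasure : MeasureTheory.Measure ℂ :=
  MeasureTheory.Measure.map (fun θ : ℝ => Complex.exp (θ * Complex.I))
    (MeasureTheory.volume.restrict (Set.Ico 0 (2 * Real.pi)))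

/-- For `re^{iθ} ∈ D`, the associated arc `J(re^{iθ}) = {e^{it} : |t − θ| ≤ π(1−r)}`. -/
def arcJ (r θ : ℝ) : Set ℂ :=
  {z | ∃ t : ℝ, |t - θ| ≤ Real.pi * (1 - r) ∧ z = Complex.exp (t * Complex.I)}

open MeasureTheory Set
open scoped ENNReal Finset

section IntervalCovering

variable {ι : Type*}

theorem Set.Ioo_subset_Ioo_union_Ioo_of_mem {α : Type*} [LinearOrder α]
    {a b a₁ b₁ a₂ b₂ y : α} (h₁ : y ∈ Ioo a₁ b₁) (h₂ : y ∈ Ioo a₂ b₂) (ha : a₁ ≤ a) (hb : b ≤ b₂) :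
    Ioo a b ⊆ Ioo a₁ b₁ ∪ Ioo a₂ b₂ := by
  rw [Ioo_union_Ioo' (h₂.1.trans h₁.2) (h₁.1.trans h₂.2)]
  exact Ioo_subset_Ioo (min_le_of_left_le ha) (le_max_of_le_right hb)

open Finset in
theorem exists_subcover_card_filter_Ioo_le_two {α : Type*} [LinearOrder α] {K : Set α}
    {a b : ι → α} {t : Finset ι} (hK : K ⊆ ⋃ i ∈ t, Ioo (a i) (b i)) :
    ∃ s ⊆ t, K ⊆ ⋃ i ∈ s, Ioo (a i) (b i) ∧ ∀ y, #{i ∈ s | y ∈ Ioo (a i) (b i)} ≤ 2 := by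
  classical
  obtain ⟨s, hs, hmin⟩ := Finset.exists_min_image
    {s ∈ t.powerset | K ⊆ ⋃ i ∈ s, Ioo (a i) (b i)} card ⟨t, by simpa using hK⟩
  rw [mem_filter, Finset.mem_powerset] at hs
  refine ⟨s, hs.1, hs.2, fun y => ?_⟩
  by_contra! h3
  set u := {i ∈ s | y ∈ Ioo (a i) (b i)}
  have hu : u.Nonempty := card_pos.mp (by omega)
  obtain ⟨j, hj, hja⟩ := u.exists_min_image a hu
  obtain ⟨k, hk, hkb⟩ := u.exists_max_image b hu
  -- any third interval through `y` lies in the union of the two extreme ones, so it is redundant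
  obtain ⟨l, hl⟩ : ((u.erase j).erase k).Nonempty := by
    rw [← card_pos]
    have := pred_card_le_card_erase (s := u) (a := j)
    have := pred_card_le_card_erase (s := u.erase j) (a := k)
    omega
  simp only [mem_erase] at hl
  obtain ⟨hlk, hlj, hl⟩ := hl
  have hsub := Ioo_subset_Ioo_union_Ioo_of_mem (mem_filter.mp hj).2 (mem_filter.mp hk).2
    (hja l hl) (hkb l hl)
  have hcover : K ⊆ ⋃ i ∈ s.erase l, Ioo (a i) (b i) := by
    intro z hz
    obtain ⟨i, hi, hzi⟩ := mem_iUnion₂.mp (hs.2 hz)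
    by_cases hil : i = l
    · subst hil
      rcases hsub hzi with hzj | hzk
      · exact mem_iUnion₂.mpr ⟨j, mem_erase.mpr ⟨Ne.symm hlj, (mem_filter.mp hj).1⟩, hzj⟩
      · exact mem_iUnion₂.mpr ⟨k, mem_erase.mpr ⟨Ne.symm hlk, (mem_filter.mp hk).1⟩, hzk⟩
    · exact mem_iUnion₂.mpr ⟨i, mem_erase.mpr ⟨hil, hi⟩, hzi⟩
  have := hmin (s.erase l)
    (mem_filter.mpr ⟨Finset.mem_powerset.mpr ((erase_subset _ _).trans hs.1), hcover⟩)
  have := card_erase_lt_of_mem (mem_filter.mp hl).1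
  omega

open Finset in
theorem sum_measure_le_mul_of_card_filter_le {α : Type*} [MeasurableSpace α] (μ : Measure α)
    {s : Finset ι} {B : ι → Set α} [∀ y, DecidablePred fun i => y ∈ B i] {I : Set α} {n : ℕ}
    (hB : ∀ i ∈ s, MeasurableSet (B i)) (hBI : ∀ i ∈ s, B i ⊆ I)
    (hn : ∀ y, #{i ∈ s | y ∈ B i} ≤ n) :
    ∑ i ∈ s, μ (B i) ≤ n * μ I := by
  calc ∑ i ∈ s, μ (B i) = ∫⁻ y, ∑ i ∈ s, (B i).indicator 1 y ∂μ := by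
        rw [lintegral_finsetSum _ fun i hi => measurable_one.indicator (hB i hi)]
        exact sum_congr rfl fun i hi => (lintegral_indicator_one (hB i hi)).symm
    _ ≤ ∫⁻ y, I.indicator (fun _ => (n : ℝ≥0∞)) y ∂μ := lintegral_mono fun y => ?_
    _ ≤ n * μ I := lintegral_indicator_const_le I n
  by_cases hy : y ∈ I
  · simp only [indicator_of_mem hy, indicator_apply, Pi.one_apply, sum_boole]
    exact_mod_cast hn y
  · rw [indicator_of_notMem hy]
    exact (sum_eq_zero fun i hi => indicator_of_notMem (fun h => hy (hBI i hi h)) _).le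

theorem volume_inter_iUnion_Ioo_le {S I : Set ℝ} (hS : MeasurableSet S) {a b : ι → ℝ}
    {c : ℝ≥0∞} (hI : ∀ i, Ioo (a i) (b i) ⊆ I)
    (hlow : ∀ i, volume (S ∩ Ioo (a i) (b i)) ≤ c * volume (Ioo (a i) (b i))) :
    volume (S ∩ ⋃ i, Ioo (a i) (b i)) ≤ 2 * c * volume I := by
  rw [(hS.inter (isOpen_iUnion fun i => isOpen_Ioo).measurableSet).measure_eq_iSup_isCompact]
  refine iSup₂_le fun K hK => iSup_le fun hKc => ?_
  obtain ⟨t, ht⟩ :=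
    hKc.elim_finite_subcover _ (fun i => isOpen_Ioo) (hK.trans inter_subset_right)
  obtain ⟨s, -, hs, hmult⟩ := exists_subcover_card_filter_Ioo_le_two ht
  calc volume K ≤ ∑ i ∈ s, volume (K ∩ Ioo (a i) (b i)) := by
        refine (measure_mono fun z hz => ?_).trans (measure_biUnion_finset_le _ _)
        obtain ⟨i, hi, hzi⟩ := mem_iUnion₂.mp (hs hz)
        exact mem_iUnion₂.mpr ⟨i, hi, hz, hzi⟩
    _ ≤ ∑ i ∈ s, c * volume (Ioo (a i) (b i)) := Finset.sum_le_sum fun i _ =>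
        (measure_mono (inter_subset_inter_left _ (hK.trans inter_subset_left))).trans (hlow i)
    _ ≤ c * (2 * volume I) := by
        rw [← Finset.mul_sum]
        gcongr
        exact_mod_cast sum_measure_le_mul_of_card_filter_le volume (fun i _ => measurableSet_Ioo)
          (fun i _ => hI i) hmult
    _ = 2 * c * volume I := by ring

theorem exists_isCompact_forall_le_volume_inter_Icc {S T : Set ℝ} (hS : MeasurableSet S)
    (hT : MeasurableSet T) (hTS : T ⊆ S) {a b R : ℝ} (hTab : T ⊆ Icc a b) {c : ℝ≥0∞}
    (hc : 2 * c * volume (Icc (a - R) (b + R)) < volume T) :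
    ∃ K ⊆ T, IsCompact K ∧ 0 < volume K ∧
      ∀ x ∈ K, ∀ h ≤ R, c * volume (Icc (x - h) (x + h)) ≤ volume (S ∩ Icc (x - h) (x + h)) := by
  let ι := {p : ℝ × ℝ // p.1 ∈ T ∧ p.2 ≤ R ∧
    volume (S ∩ Icc (p.1 - p.2) (p.1 + p.2)) < c * volume (Icc (p.1 - p.2) (p.1 + p.2))}
  set U := ⋃ p : ι, Ioo (p.1.1 - p.1.2) (p.1.1 + p.1.2)
  have hU : MeasurableSet U := (isOpen_iUnion fun _ => isOpen_Ioo).measurableSet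
  have hSU : volume (S ∩ U) ≤ 2 * c * volume (Icc (a - R) (b + R)) := by
    refine volume_inter_iUnion_Ioo_le hS (fun p => ?_) (fun p => ?_)
    · have hab := hTab p.2.1
      have hR := p.2.2.1
      exact Ioo_subset_Icc_self.trans
        (Icc_subset_Icc (by linarith [hab.1]) (by linarith [hab.2]))
    · rw [Real.volume_Ioo, ← Real.volume_Icc]
      exact (measure_mono (inter_subset_inter_right _ Ioo_subset_Icc_self)).trans p.2.2.2.le
  have hgood : 0 < volume (T \ U) := by
    refine pos_iff_ne_zero.mpr fun h0 => hc.not_ge ?_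
    calc volume T ≤ volume (S ∩ U) + volume (T \ U) :=
          (measure_le_inter_add_sdiff volume T U).trans (by gcongr)
      _ ≤ _ := by rw [h0, add_zero]; exact hSU
  obtain ⟨K, hKU, hK, hKpos⟩ := (hT.diff hU).exists_lt_isCompact hgood
  refine ⟨K, hKU.trans sdiff_subset, hK, hKpos, fun x hx h hR => ?_⟩
  by_contra! hlt
  have hh : 0 < h := by
    by_contra! hh
    rw [Real.volume_Icc, ENNReal.ofReal_of_nonpos (by linarith), mul_zero] at hlt
    exact not_lt_zero hlt
  exact (hKU hx).2 (mem_iUnion.mpr ⟨⟨(x, h), (hKU hx).1, hR, hlt⟩, by simp [hh]⟩)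

open Real

local notation "expI" => fun θ : ℝ => Complex.exp (θ * Complex.I)

theorem Function.Periodic.map_restrict_Ioc_eq {β : Type*} [MeasurableSpace β] {f : ℝ → β}
    {T : ℝ} (hf : Function.Periodic f T) (hfm : Measurable f) (hT : 0 < T) (s t : ℝ) :
    (volume.restrict (Ioc s (s + T))).map f = (volume.restrict (Ioc t (t + T))).map f := by
  ext U hU
  simp only [Measure.map_apply hfm hU, Measure.restrict_apply (hfm hU)]
  refine (isAddFundamentalDomain_Ioc hT s).measure_set_eq (isAddFundamentalDomain_Ioc hT t)
    (hfm hU) fun ⟨g, hg⟩ => ?_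
  obtain ⟨n, rfl⟩ := AddSubgroup.mem_zmultiples_iff.mp hg
  ext x
  simp [add_comm _ x, hf.int_mul n x]

theorem periodic_expI : Function.Periodic expI (2 * π) := fun x => by
  simp only [Complex.ofReal_add, Complex.ofReal_mul, add_mul, Complex.exp_add]
  push_cast
  rw [Complex.exp_two_pi_mul_I, mul_one]

theorem expI_eq_expI_iff {x y : ℝ} :
    Complex.exp (x * Complex.I) = Complex.exp (y * Complex.I) ↔
      ∃ n : ℤ, x = y + n * (2 * π) := by
  rw [← Circle.exp_eq_exp, Circle.ext_iff, Circle.coe_exp, Circle.coe_exp]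

theorem measurable_expI : Measurable expI := by fun_prop

theorem continuous_expI : Continuous expI := by fun_prop

instance : IsFiniteMeasure circleMeasure := by
  have : IsFiniteMeasure (volume.restrict (Ico 0 (2 * π))) :=
    isFiniteMeasure_restrict.mpr measure_Ico_lt_top.ne
  exact Measure.isFiniteMeasure_map _ _

theorem circleMeasure_eq_map_restrict_Ioc (t : ℝ) :
    circleMeasure = (volume.restrict (Ioc t (t + 2 * π))).map expI := by
  rw [circleMeasure, Measure.restrict_congr_set Ico_ae_eq_Ioc]
  simpa using periodic_expI.map_restrict_Ioc_eq measurable_expI two_pi_pos 0 t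

theorem circleMeasure_apply_of_measurableSet {S : Set ℂ} (hS : MeasurableSet S) (t : ℝ) :
    circleMeasure S = volume (expI ⁻¹' S ∩ Ioc t (t + 2 * π)) := by
  rw [circleMeasure_eq_map_restrict_Ioc t, Measure.map_apply measurable_expI hS,
    Measure.restrict_apply (measurable_expI hS)]

theorem arcJ_eq_image (r θ : ℝ) :
    arcJ r θ = expI '' Icc (θ - π * (1 - r)) (θ + π * (1 - r)) := by
  ext z
  simp only [arcJ, abs_sub_le_iff, mem_ofPred_eq, mem_image, mem_Icc, sub_le_iff_le_add]
  grind

theorem arcJ_eq_of_expI_eq {r θ x : ℝ}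
    (h : Complex.exp (θ * Complex.I) = Complex.exp (x * Complex.I)) : arcJ r θ = arcJ r x := by
  obtain ⟨n, rfl⟩ := expI_eq_expI_iff.mp h
  rw [arcJ_eq_image, arcJ_eq_image, add_sub_right_comm, add_right_comm,
    ← image_add_const_Icc, image_image, funext (periodic_expI.int_mul n)]

theorem measurableSet_arcJ (r θ : ℝ) : MeasurableSet (arcJ r θ) := by
  rw [arcJ_eq_image]
  exact (isCompact_Icc.image continuous_expI).isClosed.measurableSet

theorem circleMeasure_arcJ_inter {S : Set ℂ} (hS : MeasurableSet S) {r : ℝ} (hr : 0 ≤ r)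
    (θ : ℝ) : circleMeasure (arcJ r θ ∩ S) =
      volume (expI ⁻¹' S ∩ Icc (θ - π * (1 - r)) (θ + π * (1 - r))) := by
  set h := π * (1 - r)
  have hh : h ≤ π := by nlinarith [pi_pos]
  -- on the window `(θ - π, θ + π)` the arc lifts to the single interval `[θ - h, θ + h]`
  have hwindow : Ioc (θ - π) (θ - π + 2 * π) =ᵐ[volume] Ioo (θ - π) (θ + π) := by
    rw [show θ - π + 2 * π = θ + π by ring]
    exact Ioo_ae_eq_Ioc.symm
  rw [circleMeasure_apply_of_measurableSet ((measurableSet_arcJ r θ).inter hS) (θ - π),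
    measure_congr ((ae_eq_refl _).inter hwindow)]
  refine le_antisymm (measure_mono ?_) ?_
  · rintro x ⟨⟨⟨t, ht, htx⟩, hxS⟩, hx⟩
    obtain ⟨n, rfl⟩ := expI_eq_expI_iff.mp htx
    rw [abs_le] at ht
    have hn : n = 0 := by
      have h1 : -1 < n := by exact_mod_cast (show (-1 : ℝ) < n by nlinarith [hx.1, pi_pos])
      have h2 : n < 1 := by exact_mod_cast (show (n : ℝ) < 1 by nlinarith [hx.2, pi_pos])
      omega
    subst hn
    exact ⟨hxS, by simp only [Int.cast_zero, zero_mul, add_zero]; constructor <;> linarith⟩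
  · calc volume (expI ⁻¹' S ∩ Icc (θ - h) (θ + h))
        = volume (expI ⁻¹' S ∩ Ioo (θ - h) (θ + h)) :=
          measure_congr ((ae_eq_refl _).inter Ioo_ae_eq_Icc.symm)
      _ ≤ _ := measure_mono ?_
    rintro x ⟨hxS, hx₁, hx₂⟩
    exact ⟨⟨⟨x, abs_le.mpr ⟨by linarith, by linarith⟩, rfl⟩, hxS⟩, by linarith, by linarith⟩

theorem circleMeasure_arcJ {r : ℝ} (hr : 0 ≤ r) (θ : ℝ) :
    circleMeasure (arcJ r θ) = ENNReal.ofReal (2 * (π * (1 - r))) := by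
  rw [← inter_univ (arcJ r θ), circleMeasure_arcJ_inter MeasurableSet.univ hr, preimage_univ,
    univ_inter, volume_Icc]
  ring_nf

theorem le_circleMeasure_arcJ_inter_div {E : Set ℂ} (hE : MeasurableSet E) {r x c : ℝ}
    (hr : r ∈ Ico (0 : ℝ) 1) (hc : 0 ≤ c)
    (hdens : ENNReal.ofReal c * volume (Icc (x - π * (1 - r)) (x + π * (1 - r))) ≤
      volume (expI ⁻¹' E ∩ Icc (x - π * (1 - r)) (x + π * (1 - r)))) :
    c ≤ (circleMeasure (arcJ r x ∩ E)).toReal / (circleMeasure (arcJ r x)).toReal := by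
  have harc : 0 < (circleMeasure (arcJ r x)).toReal := by
    rw [circleMeasure_arcJ hr.1, ENNReal.toReal_ofReal (by nlinarith [pi_pos, hr.2])]
    nlinarith [pi_pos, hr.2]
  rw [le_div_iff₀ harc, ← ENNReal.toReal_ofReal hc, ← ENNReal.toReal_mul]
  refine ENNReal.toReal_mono (measure_ne_top _ _) ?_
  rwa [circleMeasure_arcJ_inter hE hr.1, ← inter_univ (arcJ r x),
    circleMeasure_arcJ_inter MeasurableSet.univ hr.1, preimage_univ, univ_inter]

theorem circle_density_lemma_general (E : Set ℂ)
    (hEm : MeasurableSet E)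
    (hEpos : 0 < (circleMeasure E).toReal) :
    ∃ F : Set ℂ, F ⊆ E ∧ MeasurableSet F ∧ 0 < (circleMeasure F).toReal ∧
      ∀ r ∈ Set.Ico (0:ℝ) 1, ∀ θ : ℝ, Complex.exp (θ * Complex.I) ∈ F →
        (circleMeasure (arcJ r θ ∩ E)).toReal / (circleMeasure (arcJ r θ)).toReal ≥
          (circleMeasure E).toReal / (2 ^ 4 * Real.pi) := by
  set m := (circleMeasure E).toReal
  set c := m / (2 ^ 4 * π) with hc
  have hA : volume (expI ⁻¹' E ∩ Ioc 0 (2 * π)) = ENNReal.ofReal m := by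
    rw [ENNReal.ofReal_toReal (measure_ne_top _ _), circleMeasure_apply_of_measurableSet hEm 0,
      zero_add]
  have hbad_lt : 2 * ENNReal.ofReal c * volume (Icc (0 - π) (2 * π + π)) <
      volume (expI ⁻¹' E ∩ Ioc 0 (2 * π)) := by
    rw [hA, Real.volume_Icc, ← ENNReal.ofReal_ofNat, ← ENNReal.ofReal_mul zero_le_two,
      ← ENNReal.ofReal_mul (by positivity), ENNReal.ofReal_lt_ofReal_iff hEpos, hc]
    field_simp
    linarith [pi_pos]
  obtain ⟨K, hKA, hK, hKpos, hKdens⟩ := exists_isCompact_forall_le_volume_inter_Icc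
    (measurable_expI hEm) ((measurable_expI hEm).inter measurableSet_Ioc) inter_subset_left
    (inter_subset_right.trans Ioc_subset_Icc_self) hbad_lt
  have hF : MeasurableSet (expI '' K) := (hK.image continuous_expI).isClosed.measurableSet
  refine ⟨expI '' K, image_subset_iff.mpr fun x hx => (hKA hx).1, hF, ?_, ?_⟩
  · refine ENNReal.toReal_pos (hKpos.trans_le ?_).ne' (measure_ne_top _ _)
    rw [circleMeasure_apply_of_measurableSet hF 0, zero_add]
    exact measure_mono fun x hx => ⟨mem_image_of_mem _ hx, (hKA hx).2⟩
  · rintro r hr θ ⟨x, hxK, hxθ⟩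
    rw [arcJ_eq_of_expI_eq hxθ.symm]
    exact le_circleMeasure_arcJ_inter_div hEm hr (by positivity)
      (hKdens x hxK _ (by nlinarith [pi_pos, hr.1]))

/-- Geometric covering lemma on the circle: for every measurable `E ⊆ T` with `|E| > 0`
there is a measurable `F ⊆ E` with `|F| > 0` such that for all `r ∈ [0,1)` and all
`ξ = e^{iθ} ∈ F`, `|J(rξ) ∩ E| / |J(rξ)| ≥ |E|/(2⁴π)`. -/
theorem circle_density_lemma (E : Set ℂ)
    (hE : E ⊆ Metric.sphere (0:ℂ) 1) (hEm : MeasurableSet E)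
    (hEpos : 0 < (circleMeasure E).toReal) :
    ∃ F : Set ℂ, F ⊆ E ∧ MeasurableSet F ∧ 0 < (circleMeasure F).toReal ∧
      ∀ r ∈ Set.Ico (0:ℝ) 1, ∀ θ : ℝ, Complex.exp (θ * Complex.I) ∈ F →
        (circleMeasure (arcJ r θ ∩ E)).toReal / (circleMeasure (arcJ r θ)).toReal ≥
          (circleMeasure E).toReal / (2 ^ 4 * Real.pi) :=
  circle_density_lemma_general E hEm hEpos
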